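/- arXiv:2010.14809 — 6 statements merged into one kernel-verified Lean document; each statement's English description precedes it below -/
import Mathlib

section
/- Let r > 0 and t > −1 be real numbers with 2r − t > 2. Then for every point x + iy in Π⁺, ∫_{Π⁺} v^t / |(x−u) + i(y+v)|^{2r} du dv = 4π · Γ(1+t) · Γ(2r−t−2) / (2^{2r} · Γ(r)² · y^{2r−t−2}), where the integral is over all u ∈ ℝ and v > 0. -/
open MeasureTheory Real Set

/-!
Integrating first in `u`, the substitution `s = w²` turns `∫ ((x - u)² + c²)^(-r) du` into a Beta
integral, equal to `c^(1 - 2r) √π Γ(r - 1/2) / Γ(r)` with `c = y + v`. What remains,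
`∫₀^∞ v^t (y + v)^(1 - 2r) dv = y^(t + 2 - 2r) B(t + 1, 2r - t - 2)`, is again a Beta integral; both
reduce to the Beta integral on `(0, 1)` through `s = x / (1 + x)`. Legendre's duplication formula
`Γ(r - 1/2) Γ(r) = 2^(2 - 2r) √π Γ(2r - 1)` puts the product into the stated form.
-/

theorem integral_Ioo_rpow_mul_one_sub_rpow {a b : ℝ} (ha : 0 < a) (hb : 0 < b) :
    ∫ s in Ioo (0:ℝ) 1, s ^ (a - 1) * (1 - s) ^ (b - 1) = Gamma a * Gamma b / Gamma (a + b) := by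
  have hB := Complex.betaIntegral_eq_Gamma_mul_div a b (by simpa) (by simpa)
  rw [Complex.betaIntegral, intervalIntegral.integral_of_le zero_le_one,
    integral_Ioc_eq_integral_Ioo] at hB
  apply Complex.ofReal_injective
  push_cast [← Complex.Gamma_ofReal]
  rw [← hB, ← integral_complex_ofReal]
  refine setIntegral_congr_fun measurableSet_Ioo fun s ⟨hs0, hs1⟩ => ?_
  push_cast [Complex.ofReal_cpow hs0.le, Complex.ofReal_cpow (sub_pos.2 hs1).le]
  rfl

theorem hasDerivAt_div_one_add {x : ℝ} (hx : 1 + x ≠ 0) :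
    HasDerivAt (fun x : ℝ => x / (1 + x)) ((1 + x) ^ 2)⁻¹ x :=
  ((hasDerivAt_id' x).div ((hasDerivAt_id' x).const_add 1) hx).congr_deriv (by ring)

theorem injOn_div_one_add : InjOn (fun x : ℝ => x / (1 + x)) (Ioi 0) := by
  intro p (hp : 0 < p) q (hq : 0 < q) h
  field_simp at h
  linarith

theorem image_div_one_add_Ioi : (fun x : ℝ => x / (1 + x)) '' Ioi 0 = Ioo 0 1 := by
  ext s
  constructor
  · rintro ⟨x, hx : 0 < x, rfl⟩
    exact ⟨by positivity, (div_lt_one (by positivity)).2 (by linarith)⟩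
  · rintro ⟨hs0, hs1⟩
    refine ⟨s / (1 - s), div_pos hs0 (by linarith), ?_⟩
    field_simp [(by linarith : 1 - s ≠ 0)]
    ring

theorem integral_Ioi_rpow_mul_one_add_rpow {a b : ℝ} (ha : 0 < a) (hb : 0 < b) :
    ∫ x in Ioi (0:ℝ), x ^ (a - 1) * (1 + x) ^ (-(a + b)) = Gamma a * Gamma b / Gamma (a + b) := by
  rw [← integral_Ioo_rpow_mul_one_sub_rpow ha hb, ← image_div_one_add_Ioi,
    integral_image_eq_integral_abs_deriv_smul measurableSet_Ioi
      (fun x (hx : 0 < x) => (hasDerivAt_div_one_add (by positivity)).hasDerivWithinAt)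
      injOn_div_one_add]
  refine setIntegral_congr_fun measurableSet_Ioi fun x (hx : 0 < x) => ?_
  have h1 : 0 < 1 + x := by linarith
  have hsq : ((1 + x) ^ 2)⁻¹ = (1 + x) ^ (-2 : ℝ) := by
    rw [rpow_neg h1.le]; norm_cast
  rw [smul_eq_mul, abs_of_pos (by positivity), show 1 - x / (1 + x) = (1 + x)⁻¹ by field_simp; ring,
    div_rpow hx.le h1.le, inv_rpow h1.le, hsq, ← rpow_neg h1.le, div_eq_mul_inv, ← rpow_neg h1.le,
    mul_assoc, mul_left_comm, ← rpow_add h1, ← rpow_add h1]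
  ring_nf

theorem integral_Ioi_rpow_mul_add_rpow {a b c : ℝ} (ha : 0 < a) (hb : 0 < b) (hc : 0 < c) :
    ∫ x in Ioi (0:ℝ), x ^ (a - 1) * (c + x) ^ (-(a + b))
      = c ^ (-b) * (Gamma a * Gamma b / Gamma (a + b)) := by
  have hscale := integral_comp_mul_left_Ioi' (fun x => x ^ (a - 1) * (c + x) ^ (-(a + b))) 0 hc
  rw [mul_zero] at hscale
  rw [← integral_Ioi_rpow_mul_one_add_rpow ha hb, ← hscale, smul_eq_mul, ← integral_const_mul,
    ← integral_const_mul]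
  refine setIntegral_congr_fun measurableSet_Ioi fun x (hx : 0 < x) => ?_
  rw [show c + c * x = c * (1 + x) by ring, mul_rpow hc.le hx.le, mul_rpow hc.le (by positivity)]
  have hpow : c * (c ^ (a - 1) * c ^ (-(a + b))) = c ^ (-b) := by
    rw [← rpow_add hc, ← rpow_one_add' hc.le (by linarith)]
    ring_nf
  linear_combination (x ^ (a - 1) * (1 + x) ^ (-(a + b))) * hpow

theorem integral_sq_add_sq_rpow_neg {c r : ℝ} (hc : 0 < c) (hr : 1 / 2 < r) :
    ∫ w : ℝ, (w ^ 2 + c ^ 2) ^ (-r) = c ^ (1 - 2 * r) * (√π * Gamma (r - 1 / 2) / Gamma r) := by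
  have hsub := integral_comp_rpow_Ioi_of_pos two_pos
    (g := fun s => s ^ ((1:ℝ) / 2 - 1) * (c ^ 2 + s) ^ (-(1 / 2 + (r - 1 / 2))))
  have hc2 : (c ^ 2) ^ (-(r - 1 / 2)) = c ^ (1 - 2 * r) := by
    rw [← rpow_natCast, ← rpow_mul hc.le]; push_cast; ring_nf
  rw [integral_Ioi_rpow_mul_add_rpow one_half_pos (by linarith) (by positivity),
    add_sub_cancel, Gamma_one_half_eq, hc2] at hsub
  have hsym : ∫ w : ℝ, (w ^ 2 + c ^ 2) ^ (-r) = 2 * ∫ x in Ioi 0, (x ^ 2 + c ^ 2) ^ (-r) := by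
    rw [← integral_comp_abs (f := fun w => (w ^ 2 + c ^ 2) ^ (-r))]
    simp only [sq_abs]
  rw [hsym, ← integral_const_mul, ← hsub]
  refine setIntegral_congr_fun measurableSet_Ioi fun x (hx : 0 < x) => ?_
  have hx2 : (x ^ (2:ℝ)) ^ ((1:ℝ) / 2 - 1) = x⁻¹ := by
    rw [← rpow_mul hx.le]; norm_num [rpow_neg_one]
  rw [smul_eq_mul, hx2, rpow_two, add_comm (c ^ 2)]
  norm_num
  field_simp

theorem integrable_sq_add_sq_rpow_neg {c r : ℝ} (hc : 0 < c) (hr : 1 / 2 < r) :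
    Integrable fun w : ℝ => (w ^ 2 + c ^ 2) ^ (-r) := by
  have := sub_pos.2 hr
  exact .of_integral_ne_zero (by rw [integral_sq_add_sq_rpow_neg hc hr]; positivity)

theorem sqrt_pi_mul_Gamma_sub_half_div {r : ℝ} (hr : 1 / 2 < r) :
    √π * Gamma (r - 1 / 2) / (Gamma r * Gamma (2 * r - 1))
      = 4 * π / (2 ^ (2 * r) * Gamma r ^ 2) := by
  have hdup := Gamma_mul_Gamma_add_half (r - 1 / 2)
  rw [sub_add_cancel, show 2 * (r - 1 / 2) = 2 * r - 1 by ring] at hdup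
  have h2 : (2 : ℝ) ^ (1 - (2 * r - 1)) * 2 ^ (2 * r) = 4 := by
    rw [← rpow_add two_pos, show 1 - (2 * r - 1) + 2 * r = (2 : ℝ) by ring]; norm_num
  have : 0 < r := by linarith
  have : 0 < 2 * r - 1 := by linarith
  rw [div_eq_div_iff (by positivity) (by positivity)]
  have hsq : √π ^ 2 = π := sq_sqrt pi_pos.le
  linear_combination (√π * Gamma r * 2 ^ (2 * r)) * hdup + (π * Gamma r * Gamma (2 * r - 1)) * h2
    + (Gamma r * Gamma (2 * r - 1) * 2 ^ (2 * r) * 2 ^ (1 - (2 * r - 1))) * hsq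

theorem div_norm_add_mul_I_rpow_two_mul (s a b r : ℝ) :
    s / ‖(a + b * Complex.I : ℂ)‖ ^ (2 * r) = s * (a ^ 2 + b ^ 2) ^ (-r) := by
  rw [Complex.norm_add_mul_I, sqrt_eq_rpow, ← rpow_mul (by positivity), rpow_neg (by positivity),
    div_eq_mul_inv]
  ring_nf

theorem setIntegral_upperHalfPlane_eq_of_integral_slice {f : ℝ × ℝ → ℝ} {g : ℝ → ℝ}
    (hf : Measurable f) (hf_nonneg : ∀ u v, 0 < v → 0 ≤ f (u, v))
    (hf_slice : ∀ v, 0 < v → Integrable fun u => f (u, v))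
    (h_slice : ∀ v, 0 < v → ∫ u, f (u, v) = g v) (hg : IntegrableOn g (Ioi 0)) :
    ∫ p in {p : ℝ × ℝ | 0 < p.2}, f p = ∫ v in Ioi 0, g v := by
  have hset : {p : ℝ × ℝ | 0 < p.2} = univ ×ˢ Ioi 0 := by ext p; simp
  rw [hset, Measure.volume_eq_prod, ← Measure.prod_restrict, Measure.restrict_univ,
    ← setIntegral_congr_fun measurableSet_Ioi h_slice]
  refine integral_prod_symm f ((integrable_prod_iff' hf.aestronglyMeasurable).2 ⟨?_, ?_⟩)
  · exact (ae_restrict_iff' measurableSet_Ioi).2 (ae_of_all _ hf_slice)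
  · refine hg.congr ((ae_restrict_iff' measurableSet_Ioi).2 (ae_of_all _ fun v hv => ?_))
    simp only [Real.norm_of_nonneg (hf_nonneg _ v hv), h_slice v hv]

theorem bergman_kernel_integral_general (r t : ℝ) (ht : -1 < t)
    (hrt : 2 < 2 * r - t) (x y : ℝ) (hy : 0 < y) :
    ∫ p in {p : ℝ × ℝ | 0 < p.2},
        p.2 ^ t / ‖((x - p.1) + (y + p.2) * Complex.I : ℂ)‖ ^ (2 * r)
      = 4 * π * Real.Gamma (1 + t) * Real.Gamma (2 * r - t - 2) /
          (2 ^ (2 * r) * Real.Gamma r ^ 2 * y ^ (2 * r - t - 2)) := by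
  have hr : 1 / 2 < r := by linarith
  have ha : 0 < t + 1 := by linarith
  have hb : 0 < 2 * r - t - 2 := by linarith
  have hab : 0 < 2 * r - 1 := by linarith
  have h_integrand : ∀ p ∈ {p : ℝ × ℝ | 0 < p.2},
      p.2 ^ t / ‖((x - p.1) + (y + p.2) * Complex.I : ℂ)‖ ^ (2 * r)
        = p.2 ^ t * ((x - p.1) ^ 2 + (y + p.2) ^ 2) ^ (-r) := fun p _ => by
    simpa using div_norm_add_mul_I_rpow_two_mul (p.2 ^ t) (x - p.1) (y + p.2) r
  have h_line (v : ℝ) (hv : 0 < v) : ∫ u, v ^ t * ((x - u) ^ 2 + (y + v) ^ 2) ^ (-r)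
      = v ^ t * (y + v) ^ (1 - 2 * r) * (√π * Gamma (r - 1 / 2) / Gamma r) := by
    rw [integral_const_mul, integral_sub_left_eq_self (fun w => (w ^ 2 + (y + v) ^ 2) ^ (-r)),
      integral_sq_add_sq_rpow_neg (by linarith) hr, mul_assoc]
  have h_radial : ∫ v in Ioi 0, v ^ t * (y + v) ^ (1 - 2 * r)
      = y ^ (-(2 * r - t - 2)) * (Gamma (t + 1) * Gamma (2 * r - t - 2) / Gamma (2 * r - 1)) := by
    convert integral_Ioi_rpow_mul_add_rpow ha hb hy using 5 <;> ring
  have h_radial_integrable : IntegrableOn (fun v => v ^ t * (y + v) ^ (1 - 2 * r)) (Ioi 0) :=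
    .of_integral_ne_zero (by rw [h_radial]; positivity)
  rw [setIntegral_congr_fun (measurableSet_lt measurable_const measurable_snd) h_integrand,
    setIntegral_upperHalfPlane_eq_of_integral_slice (by fun_prop) (fun u v hv => by positivity)
      (fun v hv => ((integrable_sq_add_sq_rpow_neg (c := y + v) (by linarith) hr).comp_sub_left x)
        |>.const_mul (v ^ t))
      h_line (h_radial_integrable.mul_const _),
    integral_mul_const, h_radial]
  calc _ = √π * Gamma (r - 1 / 2) / (Gamma r * Gamma (2 * r - 1))
        * (Gamma (t + 1) * Gamma (2 * r - t - 2)) / y ^ (2 * r - t - 2) := by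
        rw [rpow_neg hy.le]; ring
    _ = _ := by rw [sqrt_pi_mul_Gamma_sub_half_div hr, add_comm 1 t]; ring

/-- Explicit evaluation of the Bergman-kernel-type integral on the upper half-plane. -/
theorem bergman_kernel_integral (r t : ℝ) (hr : 0 < r) (ht : -1 < t)
    (hrt : 2 < 2 * r - t) (x y : ℝ) (hy : 0 < y) :
    ∫ p in {p : ℝ × ℝ | 0 < p.2},
        p.2 ^ t / ‖((x - p.1) + (y + p.2) * Complex.I : ℂ)‖ ^ (2 * r)
      = 4 * π * Real.Gamma (1 + t) * Real.Gamma (2 * r - t - 2) /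
          (2 ^ (2 * r) * Real.Gamma r ^ 2 * y ^ (2 * r - t - 2)) :=
  bergman_kernel_integral_general r t ht hrt x y hy
end

section
/- For every holomorphic function F on Π⁺ with ∫_{Π⁺} |F(x+iy)|² dx dy < ∞, one has sup_{x+iy ∈ Π⁺} |F(x+iy)| · y ≤ (1/(2√π)) · (∫_{Π⁺} |F(x+iy)|² dx dy)^{1/2}. -/
open MeasureTheory Real Set

/-!
For `z ∈ Π⁺` the Möbius map `φ ζ = Re z + i Im z (1 + ζ) / (1 - ζ)` sends the unit disc
injectively into `Π⁺`, with `φ 0 = z` and `φ' 0 = 2 i Im z`. Its real Jacobian is `|φ'|²`, so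
`f = (F ∘ φ) φ'` satisfies `∫_{|ζ|<r} |f|² ≤ ‖F‖²_{A²}`. The area mean value property of the
holomorphic function `f²` gives `π r² |f 0|² ≤ ∫_{|ζ|<r} |f|²`, and letting `r → 1` yields
`4π (Im z)² |F z|² ≤ ‖F‖²_{A²}`.
-/

open Metric Complex

section ChangeOfVariables

variable {G : Type*} [NormedAddCommGroup G] [NormedSpace ℝ G]

theorem Complex.setIntegral_ball_eq_setIntegral_polarCoord (f : ℂ → G) (r : ℝ) :
    ∫ z in ball (0 : ℂ) r, f z
      = ∫ p in Ioo 0 r ×ˢ Ioo (-π) π, p.1 • f (Complex.polarCoord.symm p) := by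
  have htarget : Ioo 0 r ×ˢ Ioo (-π) π = polarCoord.target ∩ Prod.fst ⁻¹' Iio r := by
    ext p
    simp only [polarCoord_target, mem_prod, mem_Ioo, mem_Ioi, mem_inter_iff, mem_preimage,
      mem_Iio]
    tauto
  rw [← integral_indicator measurableSet_ball, ← Complex.integral_comp_polarCoord_symm, htarget,
    ← setIntegral_indicator (measurable_fst measurableSet_Iio)]
  refine setIntegral_congr_fun polarCoord.open_target.measurableSet fun p hp ↦ ?_
  have hmem : Complex.polarCoord.symm p ∈ ball 0 r ↔ p ∈ Prod.fst ⁻¹' Iio r := by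
    rw [mem_ball_zero_iff, Complex.norm_polarCoord_symm, abs_of_pos hp.1]
    rfl
  by_cases hpr : p ∈ Prod.fst ⁻¹' Iio r
  · rw [indicator_of_mem (hmem.2 hpr), indicator_of_mem hpr]
  · rw [indicator_of_notMem (mt hmem.1 hpr), indicator_of_notMem hpr, smul_zero]

theorem ContinuousLinearMap.det_restrictScalars_toSpanSingleton (c : ℂ) :
    ((toSpanSingleton ℂ c).restrictScalars ℝ).det = normSq c := by
  rw [ContinuousLinearMap.det, coe_restrictScalars, LinearMap.det_restrictScalars,
    ← ContinuousLinearMap.det, det_toSpanSingleton, Algebra.norm_complex_apply]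

theorem setIntegral_image_eq_setIntegral_normSq_deriv_smul {φ φ' : ℂ → ℂ} {s : Set ℂ}
    (hs : MeasurableSet s) (hφ : ∀ z ∈ s, HasDerivAt φ (φ' z) z) (hinj : InjOn φ s)
    (g : ℂ → G) :
    ∫ w in φ '' s, g w = ∫ z in s, normSq (φ' z) • g (φ z) := by
  rw [integral_image_eq_integral_abs_det_fderiv_smul volume hs
    (fun z hz ↦ (hφ z hz).hasFDerivAt.restrictScalars ℝ |>.hasFDerivWithinAt) hinj]
  simp only [ContinuousLinearMap.det_restrictScalars_toSpanSingleton,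
    abs_of_nonneg (normSq_nonneg _)]

theorem Complex.setIntegral_upperHalfPlane_eq (g : ℂ → G) :
    ∫ p in {p : ℝ × ℝ | 0 < p.2}, g (p.1 + p.2 * I) = ∫ w in {w : ℂ | 0 < w.im}, g w := by
  simp only [← mk_eq_add_mul_I]
  exact volume_preserving_equiv_real_prod.symm.setIntegral_preimage_emb
    measurableEquivRealProd.symm.measurableEmbedding g {w | 0 < w.im}

omit [NormedSpace ℝ G] in
theorem Complex.integrableOn_upperHalfPlane_iff {g : ℂ → G} :
    IntegrableOn (fun p : ℝ × ℝ ↦ g (p.1 + p.2 * I)) {p | 0 < p.2}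
      ↔ IntegrableOn g {w : ℂ | 0 < w.im} := by
  simp only [← mk_eq_add_mul_I]
  exact volume_preserving_equiv_real_prod.symm.integrableOn_comp_preimage
    measurableEquivRealProd.symm.measurableEmbedding (f := g) (s := {w | 0 < w.im})

end ChangeOfVariables

section MeanValue

variable {E : Type*} [NormedAddCommGroup E] [NormedSpace ℂ E] [CompleteSpace E]

theorem DiffContOnCl.setIntegral_polarCoord_symm_eq_two_pi_smul {f : ℂ → E} {s : ℝ}
    (hf : DiffContOnCl ℂ f (ball 0 |s|)) :
    ∫ θ in Ioo (-π) π, f (Complex.polarCoord.symm (s, θ)) = (2 * π) • f 0 := by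
  have hcircle : ∀ θ, Complex.polarCoord.symm (s, θ) = circleMap 0 s θ := fun θ ↦ by
    simp [circleMap, Complex.exp_mul_I]
  have hperiodic := ((periodic_circleMap 0 s).comp f).intervalIntegral_add_eq (-π) 0
  rw [show -π + 2 * π = π by ring, zero_add] at hperiodic
  simp only [hcircle, ← integral_Ioc_eq_integral_Ioo,
    ← intervalIntegral.integral_of_le (neg_le_self pi_pos.le)]
  rw [← hf.circleAverage, circleAverage_def, smul_inv_smul₀ (by positivity)]
  exact hperiodic

theorem DiffContOnCl.setIntegral_ball_eq_smul {f : ℂ → E} {r : ℝ} (hr : 0 < r)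
    (hf : DiffContOnCl ℂ f (ball 0 r)) :
    ∫ z in ball (0 : ℂ) r, f z = (π * r ^ 2) • f 0 := by
  have hcont : ContinuousOn (fun p : ℝ × ℝ ↦ p.1 • f (Complex.polarCoord.symm p))
      (Icc 0 r ×ˢ Icc (-π) π) := by
    have hpolar : Continuous fun p : ℝ × ℝ ↦ Complex.polarCoord.symm p := by
      simp only [Complex.polarCoord_symm_apply]
      fun_prop
    refine continuousOn_fst.smul ((closure_ball (0 : ℂ) hr.ne' ▸ hf.continuousOn).comp
      hpolar.continuousOn fun p hp ↦ ?_)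
    rw [mem_closedBall_zero_iff, Complex.norm_polarCoord_symm, abs_of_nonneg hp.1.1]
    exact hp.1.2
  have hint : IntegrableOn (fun p : ℝ × ℝ ↦ p.1 • f (Complex.polarCoord.symm p))
      (Ioo 0 r ×ˢ Ioo (-π) π) (volume.prod volume) :=
    (hcont.integrableOn_compact (isCompact_Icc.prod isCompact_Icc)).mono_set
      (prod_mono Ioo_subset_Icc_self Ioo_subset_Icc_self)
  have hcircle : ∀ s ∈ Ioo 0 r,
      ∫ θ in Ioo (-π) π, s • f (Complex.polarCoord.symm (s, θ)) = s • (2 * π) • f 0 := by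
    intro s hs
    rw [integral_smul]
    refine congrArg _ (DiffContOnCl.setIntegral_polarCoord_symm_eq_two_pi_smul ?_)
    rw [abs_of_pos hs.1]
    exact hf.differentiableOn.diffContOnCl_ball (closedBall_subset_ball hs.2)
  have hradial : ∫ s in Ioo 0 r, s = r ^ 2 / 2 := by
    rw [← integral_Ioc_eq_integral_Ioo, ← intervalIntegral.integral_of_le hr.le, integral_id]
    ring
  rw [Complex.setIntegral_ball_eq_setIntegral_polarCoord, Measure.volume_eq_prod,
    setIntegral_prod _ hint, setIntegral_congr_fun measurableSet_Ioo hcircle,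
    integral_smul_const, hradial, smul_smul]
  congr 1
  ring

theorem DiffContOnCl.mul_sq_norm_le_setIntegral_ball {f : ℂ → ℂ} {r : ℝ} (hr : 0 < r)
    (hf : DiffContOnCl ℂ f (ball 0 r)) :
    π * r ^ 2 * ‖f 0‖ ^ 2 ≤ ∫ z in ball (0 : ℂ) r, ‖f z‖ ^ 2 := by
  have hmean := ((differentiable_pow 2).comp_diffContOnCl hf).setIntegral_ball_eq_smul hr
  calc π * r ^ 2 * ‖f 0‖ ^ 2 = ‖∫ z in ball (0 : ℂ) r, f z ^ 2‖ := by
        rw [← Function.comp_def (· ^ 2) f, hmean, Function.comp_apply, norm_smul, norm_pow,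
          norm_of_nonneg (by positivity)]
    _ ≤ ∫ z in ball (0 : ℂ) r, ‖f z‖ ^ 2 := by
        refine (norm_integral_le_integral_norm _).trans_eq ?_
        simp only [norm_pow]

end MeanValue

noncomputable def cayleyMap (z ζ : ℂ) : ℂ := z.re + I * z.im * ((1 + ζ) / (1 - ζ))

theorem cayleyMap_zero (z : ℂ) : cayleyMap z 0 = z := by
  simp [cayleyMap, mul_comm I, re_add_im]

theorem hasDerivAt_cayleyMap (z : ℂ) {ζ : ℂ} (hζ : ζ ≠ 1) :
    HasDerivAt (cayleyMap z) (2 * I * z.im / (1 - ζ) ^ 2) ζ := by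
  have hden : 1 - ζ ≠ 0 := sub_ne_zero.2 hζ.symm
  have hnum : HasDerivAt (fun w : ℂ ↦ 1 + w) 1 ζ := by
    simpa using (hasDerivAt_id ζ).const_add 1
  have hdenom : HasDerivAt (fun w : ℂ ↦ 1 - w) (-1) ζ := by
    simpa using (hasDerivAt_id ζ).const_sub 1
  refine (((hnum.fun_div hdenom hden).const_mul (I * z.im)).const_add (z.re : ℂ)).congr_deriv ?_
  field_simp
  ring

theorem im_cayleyMap_pos {z : ℂ} (hz : 0 < z.im) {ζ : ℂ} (hζ : ‖ζ‖ < 1) :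
    0 < (cayleyMap z ζ).im := by
  have hden : 0 < normSq (1 - ζ) := normSq_pos.2 (sub_ne_zero.2 (by rintro rfl; simp at hζ))
  have hre : ((1 + ζ) / (1 - ζ)).re = (1 - normSq ζ) / normSq (1 - ζ) := by
    rw [div_re, ← add_div, normSq_apply ζ]
    simp only [add_re, one_re, sub_re, add_im, one_im, sub_im]
    ring
  have him : (cayleyMap z ζ).im = z.im * ((1 + ζ) / (1 - ζ)).re := by simp [cayleyMap]
  have hnormSq : normSq ζ < 1 := by
    rw [normSq_eq_norm_sq]
    nlinarith [norm_nonneg ζ]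
  rw [him, hre]
  exact mul_pos hz (div_pos (by linarith) hden)

theorem injOn_cayleyMap {z : ℂ} (hz : z.im ≠ 0) : InjOn (cayleyMap z) {1}ᶜ := by
  intro a ha b hb hab
  have ha' : 1 - a ≠ 0 := sub_ne_zero.2 (Ne.symm ha)
  have hb' : 1 - b ≠ 0 := sub_ne_zero.2 (Ne.symm hb)
  have hc : I * z.im ≠ 0 := mul_ne_zero I_ne_zero (ofReal_ne_zero.2 hz)
  have hquot := mul_left_cancel₀ hc (add_left_cancel hab)
  rw [div_eq_div_iff ha' hb'] at hquot
  linear_combination hquot / 2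

theorem mul_sq_norm_le_setIntegral_upperHalfPlane_of_mem_Ioo {F : ℂ → ℂ}
    (hF : DifferentiableOn ℂ F {w | 0 < w.im})
    (hInt : IntegrableOn (fun w ↦ ‖F w‖ ^ 2) {w | 0 < w.im}) {z : ℂ} (hz : 0 < z.im)
    {r : ℝ} (hr : r ∈ Ioo 0 1) :
    π * r ^ 2 * (2 * z.im * ‖F z‖) ^ 2 ≤ ∫ w in {w : ℂ | 0 < w.im}, ‖F w‖ ^ 2 := by
  set φ' : ℂ → ℂ := fun ζ ↦ 2 * I * z.im / (1 - ζ) ^ 2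
  set f : ℂ → ℂ := fun ζ ↦ F (cayleyMap z ζ) * φ' ζ
  have hne_one : ball (0 : ℂ) 1 ⊆ {1}ᶜ := fun ζ hζ (h : ζ = 1) ↦ by simp [h] at hζ
  have hmaps : MapsTo (cayleyMap z) (ball 0 1) {w | 0 < w.im} := fun ζ hζ ↦
    im_cayleyMap_pos hz (mem_ball_zero_iff.1 hζ)
  have hφ : ∀ ζ ∈ ball (0 : ℂ) 1, HasDerivAt (cayleyMap z) (φ' ζ) ζ := fun ζ hζ ↦
    hasDerivAt_cayleyMap z (hne_one hζ)
  have hf : DiffContOnCl ℂ f (ball 0 r) := by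
    refine DifferentiableOn.diffContOnCl_ball (U := ball 0 1) ?_ (closedBall_subset_ball hr.2)
    refine (hF.comp (fun ζ hζ ↦ (hφ ζ hζ).differentiableAt.differentiableWithinAt) hmaps).mul
      fun ζ hζ ↦ DifferentiableAt.differentiableWithinAt ?_
    exact (differentiableAt_const _).div
      ((differentiableAt_const _).sub differentiableAt_id |>.pow 2)
      (pow_ne_zero 2 (sub_ne_zero.2 (Ne.symm (hne_one hζ))))
  have hf0 : ‖f 0‖ = 2 * z.im * ‖F z‖ := by
    simp only [f, φ', cayleyMap_zero, sub_zero, one_pow, div_one, norm_mul, Complex.norm_ofNat,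
      norm_I, mul_one, norm_real, norm_eq_abs, abs_of_pos hz]
    ring
  have hball : ball (0 : ℂ) r ⊆ ball 0 1 := ball_subset_ball hr.2.le
  calc π * r ^ 2 * (2 * z.im * ‖F z‖) ^ 2 = π * r ^ 2 * ‖f 0‖ ^ 2 := by rw [hf0]
    _ ≤ ∫ ζ in ball (0 : ℂ) r, ‖f ζ‖ ^ 2 := hf.mul_sq_norm_le_setIntegral_ball hr.1
    _ = ∫ w in cayleyMap z '' ball 0 r, ‖F w‖ ^ 2 := by
      rw [setIntegral_image_eq_setIntegral_normSq_deriv_smul measurableSet_ball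
        (fun ζ hζ ↦ hφ ζ (hball hζ)) ((injOn_cayleyMap hz.ne').mono (hball.trans hne_one))]
      simp only [f, norm_mul, mul_pow, normSq_eq_norm_sq, smul_eq_mul, mul_comm]
    _ ≤ ∫ w in {w : ℂ | 0 < w.im}, ‖F w‖ ^ 2 :=
      setIntegral_mono_set hInt (ae_of_all _ fun w ↦ by positivity)
        (hmaps.mono_left hball).image_subset.eventuallyLE

theorem mul_sq_norm_le_setIntegral_upperHalfPlane {F : ℂ → ℂ}
    (hF : DifferentiableOn ℂ F {w | 0 < w.im})
    (hInt : IntegrableOn (fun w ↦ ‖F w‖ ^ 2) {w | 0 < w.im}) {z : ℂ} (hz : 0 < z.im) :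
    π * (2 * z.im * ‖F z‖) ^ 2 ≤ ∫ w in {w : ℂ | 0 < w.im}, ‖F w‖ ^ 2 := by
  have hlim : Filter.Tendsto (fun r : ℝ ↦ π * r ^ 2 * (2 * z.im * ‖F z‖) ^ 2)
      (nhdsWithin 1 (Iio 1)) (nhds (π * 1 ^ 2 * (2 * z.im * ‖F z‖) ^ 2)) :=
    ((continuous_id.pow 2).const_mul π |>.mul continuous_const).continuousWithinAt
  simpa using le_of_tendsto hlim <| Filter.mem_of_superset (Ioo_mem_nhdsLT zero_lt_one)
    fun r hr ↦ mul_sq_norm_le_setIntegral_upperHalfPlane_of_mem_Ioo hF hInt hz hr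

/-- Sharp pointwise estimate: `sup_{x+iy ∈ Π⁺} |F(x+iy)| y ≤ ‖F‖_{A²}/(2√π)`. -/
theorem pointwise_bound_halfplane (F : ℂ → ℂ)
    (hF : DifferentiableOn ℂ F {z : ℂ | 0 < z.im})
    (hInt : IntegrableOn
      (fun p : ℝ × ℝ => ‖F (p.1 + p.2 * Complex.I)‖ ^ 2)
      {p : ℝ × ℝ | 0 < p.2}) :
    ⨆ z : {z : ℂ // 0 < z.im}, ‖F z.1‖ * (z.1).im
      ≤ (1 / (2 * Real.sqrt π)) *
        (∫ p in {p : ℝ × ℝ | 0 < p.2},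
          ‖F (p.1 + p.2 * Complex.I)‖ ^ 2) ^ ((1 : ℝ) / 2) := by
  rw [setIntegral_upperHalfPlane_eq (fun w ↦ ‖F w‖ ^ 2), ← sqrt_eq_rpow]
  have : Nonempty {z : ℂ // 0 < z.im} := ⟨⟨I, by simp⟩⟩
  refine ciSup_le fun ⟨z, hz⟩ ↦ ?_
  have hbound := mul_sq_norm_le_setIntegral_upperHalfPlane hF
    (integrableOn_upperHalfPlane_iff.1 hInt) hz
  calc ‖F z‖ * z.im = 1 / (2 * √π) * √(π * (2 * z.im * ‖F z‖) ^ 2) := by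
        rw [sqrt_mul pi_pos.le, sqrt_sq (by positivity)]
        field_simp
    _ ≤ _ := by gcongr
end

section
/- For every real number s > 1, the function g defined on (0, ∞) by g(u) = log Γ(us) − s · log Γ(u) is strictly concave on (0, ∞). -/
open Real Set Filter Topology
open scoped Nat

/-!
With `ψ₁(x) = ∑ₘ 1 / (x + m) ^ 2` and `φ(x) = x ψ₁(x)`, the second derivative of
`g(u) = log Γ(us) - s log Γ(u)` is `s² ψ₁(us) - s ψ₁(u) = (s / u) (φ(us) - φ(u))`, which is
negative because `φ` is strictly decreasing. The series for `g'` and `g''` are obtained by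
differentiating Gauss' limit formula termwise: in `logGammaSeq (us) n - s logGammaSeq u n` the
`log n` terms cancel. Finally `φ'(x) = ∑ₘ (m - x) / (x + m) ^ 3 = ψ₁(x) - 2x ∑ₘ 1 / (x + m) ^ 3`
is negative, comparing both series with integrals: `ψ₁(x) ≤ 1 / x² + 1 / (x + 1/2)` by the
midpoint rule and `∑ₘ 1 / (x + m) ^ 3 ≥ 1 / (2x²) + 1 / (2x³)` by the trapezoidal rule.
-/

lemma summable_one_div_add_nat_pow {x : ℝ} (hx : 0 ≤ x) {p : ℕ} (hp : 1 < p) :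
    Summable fun m : ℕ => 1 / (x + m) ^ p := by
  refine ((Real.summable_one_div_nat_add_rpow x p).mpr (by exact_mod_cast hp)).congr fun m => ?_
  rw [abs_of_nonneg (by positivity), Real.rpow_natCast, add_comm]

lemma tendsto_one_div_add_nat_pow_atTop_nhds_zero (x : ℝ) {p : ℕ} (hp : p ≠ 0) :
    Tendsto (fun m : ℕ => 1 / (x + m) ^ p) atTop (𝓝 0) := by
  have h : Tendsto (fun m : ℕ => (x + m) ^ p) atTop atTop :=
    (tendsto_pow_atTop hp).comp (tendsto_atTop_add_const_left _ x tendsto_natCast_atTop_atTop)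
  simp_rw [one_div]
  exact tendsto_inv_atTop_zero.comp h

lemma hasSum_sub_succ_of_antitone {c : ℕ → ℝ} (hc : Antitone c)
    (hlim : Tendsto c atTop (𝓝 0)) :
    HasSum (fun k => c k - c (k + 1)) (c 0) := by
  rw [hasSum_iff_tendsto_nat_of_nonneg fun k => sub_nonneg.2 (hc k.le_succ)]
  simp_rw [Finset.sum_range_sub']
  simpa using tendsto_const_nhds.sub hlim

lemma tsum_one_div_add_nat_sq_le {x : ℝ} (hx : 0 < x) :
    ∑' m : ℕ, 1 / (x + m) ^ 2 ≤ 1 / x ^ 2 + 1 / (x + 1 / 2) := by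
  set c : ℕ → ℝ := fun m => 1 / (x + m + 1 / 2)
  have hc : HasSum (fun m => c m - c (m + 1)) (c 0) :=
    hasSum_sub_succ_of_antitone
      (antitone_nat_of_succ_le fun m => by dsimp [c]; gcongr; linarith)
      (by simpa [c, add_right_comm] using
        tendsto_one_div_add_nat_pow_atTop_nhds_zero (x + 1 / 2) one_ne_zero)
  -- midpoint rule for the convex function `t ↦ 1 / t ^ 2`
  have hmid : ∀ A : ℝ, 0 < A → 1 / (A + 1) ^ 2 ≤ 1 / (A + 1 / 2) - 1 / (A + 1 + 1 / 2) := by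
    intro A hA
    rw [← sub_nonneg]
    have e : 1 / (A + 1 / 2) - 1 / (A + 1 + 1 / 2) - 1 / (A + 1) ^ 2 =
        1 / (4 * (A + 1 / 2) * (A + 3 / 2) * (A + 1) ^ 2) := by
      field_simp; ring
    rw [e]; positivity
  have hstep : ∀ m : ℕ, 1 / (x + (m + 1 : ℕ)) ^ 2 ≤ c m - c (m + 1) := fun m => by
    simpa [c, ← add_assoc] using hmid (x + m) (by positivity)
  have hsum := summable_one_div_add_nat_pow hx.le one_lt_two
  rw [hsum.tsum_eq_zero_add, Nat.cast_zero, add_zero]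
  gcongr
  simpa [c] using hasSum_le hstep ((summable_nat_add_iff 1).mpr hsum).hasSum hc

lemma le_tsum_one_div_add_nat_cube {x : ℝ} (hx : 0 < x) :
    1 / x ^ 2 / 2 + 1 / x ^ 3 / 2 ≤ ∑' m : ℕ, 1 / (x + m) ^ 3 := by
  set b : ℕ → ℝ := fun m => 1 / (x + m) ^ 3
  set c : ℕ → ℝ := fun m => 1 / (x + m) ^ 2 / 2
  have hb : Summable b := summable_one_div_add_nat_pow hx.le (by norm_num)
  have hb' : Summable fun m => b (m + 1) := (summable_nat_add_iff 1).mpr hb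
  have hc : HasSum (fun m => c m - c (m + 1)) (c 0) :=
    hasSum_sub_succ_of_antitone
      (antitone_nat_of_succ_le fun m => by dsimp [c]; gcongr; linarith)
      (by simpa [c] using (tendsto_one_div_add_nat_pow_atTop_nhds_zero x two_ne_zero).div_const 2)
  -- trapezoidal rule for the convex function `t ↦ 1 / t ^ 3`
  have htrap : ∀ A : ℝ, 0 < A →
      1 / A ^ 2 / 2 - 1 / (A + 1) ^ 2 / 2 ≤ (1 / A ^ 3 + 1 / (A + 1) ^ 3) / 2 := by
    intro A hA
    rw [← sub_nonneg]
    have e : (1 / A ^ 3 + 1 / (A + 1) ^ 3) / 2 - (1 / A ^ 2 / 2 - 1 / (A + 1) ^ 2 / 2) =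
        (2 * A + 1) / (2 * A ^ 3 * (A + 1) ^ 3) := by
      field_simp; ring
    rw [e]; positivity
  have hstep : ∀ m : ℕ, c m - c (m + 1) ≤ (b m + b (m + 1)) / 2 := fun m => by
    simpa [b, c, ← add_assoc] using htrap (x + m) (by positivity)
  have hle := hasSum_le hstep hc ((hb.add hb').div_const 2).hasSum
  have hshift : ∑' m, b (m + 1) = ∑' m, b m - b 0 := by rw [hb.tsum_eq_zero_add]; ring
  rw [tsum_div_const, hb.tsum_add hb', hshift] at hle
  simp only [c, b, Nat.cast_zero, add_zero] at hle ⊢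
  linarith

lemma tsum_sub_div_add_nat_cube_neg {x : ℝ} (hx : 0 < x) :
    ∑' m : ℕ, ((m : ℝ) - x) / (x + m) ^ 3 < 0 := by
  have hsq := summable_one_div_add_nat_pow hx.le one_lt_two
  have hcube := (summable_one_div_add_nat_pow hx.le (p := 3) (by norm_num)).mul_left (2 * x)
  have hsplit : ∀ m : ℕ, ((m : ℝ) - x) / (x + m) ^ 3 =
      1 / (x + m) ^ 2 - 2 * x * (1 / (x + m) ^ 3) := fun m => by
    have : 0 < x + m := by positivity
    field_simp; ring
  have hsq_le := tsum_one_div_add_nat_sq_le hx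
  have hcube_ge := le_tsum_one_div_add_nat_cube hx
  have hx' : 1 / (x + 1 / 2) < 1 / x := one_div_lt_one_div_of_lt hx (by linarith)
  have e : 2 * x * (1 / x ^ 2 / 2 + 1 / x ^ 3 / 2) = 1 / x + 1 / x ^ 2 := by field_simp
  rw [tsum_congr hsplit, hsq.tsum_sub hcube, tsum_mul_left]
  nlinarith

lemma hasDerivAt_div_add_sq {m x : ℝ} (hx : x + m ≠ 0) :
    HasDerivAt (fun y => y / (y + m) ^ 2) ((m - x) / (x + m) ^ 3) x := by
  have h : HasDerivAt (fun y => (y + m) ^ 2) (2 * (x + m)) x := by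
    simpa using ((hasDerivAt_id' x).add_const m).fun_pow 2
  refine ((hasDerivAt_id' x).div h (pow_ne_zero 2 hx)).congr_deriv ?_
  field_simp
  ring

lemma strictAntiOn_tsum_div_add_nat_sq :
    StrictAntiOn (fun x : ℝ => ∑' m : ℕ, x / (x + m) ^ 2) (Ioi 0) := by
  have hderiv : ∀ x : ℝ, 0 < x → HasDerivAt (fun y : ℝ => ∑' m : ℕ, y / (y + m) ^ 2)
      (∑' m : ℕ, ((m : ℝ) - x) / (x + m) ^ 3) x := by
    intro x hx
    have hbound : ∀ (m : ℕ) (y : ℝ), y ∈ Ioi (x / 2) →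
        ‖((m : ℝ) - y) / (y + m) ^ 3‖ ≤ 1 / (x / 2 + m) ^ 2 := by
      intro m y hy
      have hy : x / 2 < y := hy
      have hym : 0 < y + m := by linarith [(Nat.cast_nonneg m : (0 : ℝ) ≤ m)]
      rw [Real.norm_eq_abs, abs_div, abs_of_pos (pow_pos hym 3)]
      calc |(m : ℝ) - y| / (y + m) ^ 3 ≤ (y + m) / (y + m) ^ 3 := by
            gcongr; rw [abs_le]; constructor <;> linarith
        _ = 1 / (y + m) ^ 2 := by field_simp
        _ ≤ 1 / (x / 2 + m) ^ 2 := by gcongr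
    have hx2 : x ∈ Ioi (x / 2) := by simp only [mem_Ioi]; linarith
    exact hasDerivAt_tsum_of_isPreconnected
      (summable_one_div_add_nat_pow (x := x / 2) (by positivity) one_lt_two) isOpen_Ioi
      isPreconnected_Ioi
      (fun m y hy => hasDerivAt_div_add_sq (m := m)
        (by linarith [mem_Ioi.1 hy, (Nat.cast_nonneg m : (0 : ℝ) ≤ m)]))
      hbound hx2
      (by simpa only [mul_one_div] using (summable_one_div_add_nat_pow hx.le one_lt_two).mul_left x)
      hx2
  refine strictAntiOn_of_deriv_neg (convex_Ioi 0)
    (fun x hx => (hderiv x hx).continuousAt.continuousWithinAt) fun x hx => ?_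
  rw [interior_Ioi] at hx
  rw [(hderiv x hx).deriv]
  exact tsum_sub_div_add_nat_cube_neg hx

section LogGammaCombination

variable {s u m : ℝ}

lemma logGammaSeq_mul_sub_mul_logGammaSeq (s u : ℝ) (n : ℕ) :
    BohrMollerup.logGammaSeq (u * s) n - s * BohrMollerup.logGammaSeq u n =
      (1 - s) * log n ! + ∑ m ∈ Finset.range (n + 1), (s * log (u + m) - log (u * s + m)) := by
  simp only [BohrMollerup.logGammaSeq, Finset.sum_sub_distrib, ← Finset.mul_sum]
  ring

lemma hasDerivAt_mul_log_add_sub_log_mul_add (h₁ : u + m ≠ 0) (h₂ : u * s + m ≠ 0) :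
    HasDerivAt (fun v => s * log (v + m) - log (v * s + m)) (s / (u + m) - s / (u * s + m)) u := by
  have hl₁ := ((hasDerivAt_id' u).add_const m).log h₁
  have hl₂ := (((hasDerivAt_id' u).mul_const s).add_const m).log h₂
  exact ((hl₁.const_mul s).sub hl₂).congr_deriv (by field_simp)

lemma hasDerivAt_div_add_sub_div_mul_add (h₁ : u + m ≠ 0) (h₂ : u * s + m ≠ 0) :
    HasDerivAt (fun v => s / (v + m) - s / (v * s + m))
      (s ^ 2 / (u * s + m) ^ 2 - s / (u + m) ^ 2) u := by
  have hd₁ := ((hasDerivAt_id' u).add_const m).inv h₁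
  have hd₂ := (((hasDerivAt_id' u).mul_const s).add_const m).inv h₂
  refine ((hd₁.const_mul s).sub (hd₂.const_mul s)).congr_deriv ?_ |>.congr_of_eventuallyEq ?_
  · field_simp
    ring
  · exact Eventually.of_forall fun v => by simp [div_eq_mul_inv]

lemma abs_div_add_sub_div_mul_add_le {a b : ℝ} (hs : 1 ≤ s) (ha : 0 < a) (hm : 0 ≤ m)
    (hau : a ≤ u) (hub : u ≤ b) :
    |s / (u + m) - s / (u * s + m)| ≤ s * (s - 1) * b / (a + m) ^ 2 := by
  have hu : 0 < u := ha.trans_le hau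
  have hus : u ≤ u * s := le_mul_of_one_le_right hu.le hs
  have e : s / (u + m) - s / (u * s + m) = s * (s - 1) * u / ((u + m) * (u * s + m)) := by
    have : 0 < u * s + m := by positivity
    field_simp
    ring
  have hs1 : 0 ≤ s - 1 := by linarith
  have hb : 0 ≤ b := by linarith
  rw [e, abs_of_nonneg (by positivity), sq]
  gcongr
  linarith

lemma abs_sq_div_mul_add_sub_div_add_sq_le {a : ℝ} (hs : 0 < s) (ha : 0 < a) (hm : 0 ≤ m)
    (hau : a ≤ u) :
    |s ^ 2 / (u * s + m) ^ 2 - s / (u + m) ^ 2| ≤ s ^ 2 / (a * s + m) ^ 2 + s / (a + m) ^ 2 := by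
  refine (abs_sub _ _).trans ?_
  rw [abs_of_nonneg (by positivity), abs_of_nonneg (by positivity)]
  gcongr

lemma hasDerivAt_tsum_div_add_sub_div_mul_add (hs : 1 ≤ s) (hu : 0 < u) :
    HasDerivAt (fun v => ∑' m : ℕ, (s / (v + m) - s / (v * s + m)))
      (∑' m : ℕ, (s ^ 2 / (u * s + m) ^ 2 - s / (u + m) ^ 2)) u := by
  have hs0 : 0 < s := one_pos.trans_le hs
  have hu2 : 0 < u / 2 := by positivity
  have hmem : u ∈ Ioi (u / 2) := by simp only [mem_Ioi]; linarith
  have hbound := ((summable_one_div_add_nat_pow (x := u / 2 * s) (by positivity)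
    one_lt_two).mul_left (s ^ 2)).add
    ((summable_one_div_add_nat_pow hu2.le one_lt_two).mul_left s)
  have hsummable : Summable fun m : ℕ => s / (u + m) - s / (u * s + m) :=
    .of_norm_bounded ((summable_one_div_add_nat_pow hu.le one_lt_two).mul_left (s * (s - 1) * u))
      fun m => by
        rw [Real.norm_eq_abs, mul_one_div]
        exact abs_div_add_sub_div_mul_add_le hs hu m.cast_nonneg le_rfl le_rfl
  refine hasDerivAt_tsum_of_isPreconnected (t := Ioi (u / 2))
    (g := fun (m : ℕ) v => s / (v + m) - s / (v * s + m))
    (g' := fun (m : ℕ) v => s ^ 2 / (v * s + m) ^ 2 - s / (v + m) ^ 2)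
    hbound isOpen_Ioi isPreconnected_Ioi (fun m v hv => ?_) (fun m v hv => ?_) hmem hsummable hmem
  · have hv : 0 < v := hu2.trans hv
    exact hasDerivAt_div_add_sub_div_mul_add (by positivity) (by positivity)
  · rw [Real.norm_eq_abs, mul_one_div, mul_one_div]
    exact abs_sq_div_mul_add_sub_div_add_sq_le hs0 hu2 m.cast_nonneg (le_of_lt hv)

lemma hasDerivAt_log_Gamma_mul_sub_mul_log_Gamma (hs : 1 ≤ s) (hu : 0 < u) :
    HasDerivAt (fun v => log (Gamma (v * s)) - s * log (Gamma v))
      (∑' m : ℕ, (s / (u + m) - s / (u * s + m))) u := by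
  have hu2 : 0 < u / 2 := by positivity
  have hmem : u ∈ Ioo (u / 2) (2 * u) := ⟨by linarith, by linarith⟩
  have hbound := (summable_one_div_add_nat_pow hu2.le one_lt_two).mul_left (s * (s - 1) * (2 * u))
  have hunif := tendstoUniformlyOn_tsum_nat hbound (s := Ioo (u / 2) (2 * u))
    (f := fun (m : ℕ) v => s / (v + m) - s / (v * s + m)) fun m v hv => by
      rw [Real.norm_eq_abs, mul_one_div]
      exact abs_div_add_sub_div_mul_add_le hs hu2 m.cast_nonneg hv.1.le hv.2.le
  refine hasDerivAt_of_tendstoUniformlyOn isOpen_Ioo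
    (f := fun n v => BohrMollerup.logGammaSeq (v * s) n - s * BohrMollerup.logGammaSeq v n)
    (fun v hv => (tendsto_add_atTop_nat 1).eventually (hunif v hv))
    (Eventually.of_forall fun n v hv => ?_) (fun v hv => ?_) hmem
  · have hv : 0 < v := hu2.trans hv.1
    simp_rw [logGammaSeq_mul_sub_mul_logGammaSeq]
    exact (HasDerivAt.fun_sum fun m _ =>
      hasDerivAt_mul_log_add_sub_log_mul_add (by positivity) (by positivity)).const_add _
  · have hv : 0 < v := hu2.trans hv.1
    exact (BohrMollerup.tendsto_log_gamma (by positivity)).sub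
      ((BohrMollerup.tendsto_log_gamma hv).const_mul s)

lemma tsum_sq_div_mul_add_sub_div_add_sq_neg (hs : 1 < s) (hu : 0 < u) :
    ∑' m : ℕ, (s ^ 2 / (u * s + m) ^ 2 - s / (u + m) ^ 2) < 0 := by
  have hs0 : 0 < s := one_pos.trans hs
  have hus : 0 < u * s := by positivity
  have hsummable : ∀ {x : ℝ}, 0 < x → Summable fun m : ℕ => x / (x + m) ^ 2 := fun hx => by
    simpa only [mul_one_div] using (summable_one_div_add_nat_pow hx.le one_lt_two).mul_left _
  have e : ∀ m : ℕ, s ^ 2 / (u * s + m) ^ 2 - s / (u + m) ^ 2 =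
      s / u * (u * s / (u * s + m) ^ 2 - u / (u + m) ^ 2) := fun m => by
    field_simp
  rw [tsum_congr e, tsum_mul_left, (hsummable hus).tsum_sub (hsummable hu)]
  refine mul_neg_of_pos_of_neg (by positivity) (sub_neg.2 ?_)
  exact strictAntiOn_tsum_div_add_nat_sq hu hus (lt_mul_of_one_lt_right hu hs)

end LogGammaCombination

/-- For `s > 1`, the function `g(u) = log Γ(us) − s log Γ(u)` is strictly concave
on `(0, ∞)`. -/
theorem logGamma_combination_strictConcave (s : ℝ) (hs : 1 < s) :
    StrictConcaveOn ℝ (Ioi (0 : ℝ))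
      (fun u : ℝ => Real.log (Real.Gamma (u * s)) - s * Real.log (Real.Gamma u)) := by
  have hg := fun {u : ℝ} (hu : 0 < u) => hasDerivAt_log_Gamma_mul_sub_mul_log_Gamma hs.le hu
  refine strictConcaveOn_of_deriv2_neg' (convex_Ioi 0)
    (fun u hu => (hg hu).continuousAt.continuousWithinAt) fun u hu => ?_
  have hderiv : deriv (fun v => log (Gamma (v * s)) - s * log (Gamma v)) =ᶠ[𝓝 u]
      fun v => ∑' m : ℕ, (s / (v + m) - s / (v * s + m)) :=
    eventually_of_mem (Ioi_mem_nhds hu) fun v hv => (hg hv).deriv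
  rw [Function.iterate_succ_apply, Function.iterate_one, hderiv.deriv_eq,
    (hasDerivAt_tsum_div_add_sub_div_mul_add hs.le hu).deriv]
  exact tsum_sq_div_mul_add_sub_div_add_sq_neg hs hu
end

section
/- Let ψ denote the digamma function, ψ(x) = (log Γ)'(x) for x > 0. Then the function h defined on (0, ∞) by h(t) = t · ψ'(t) is strictly decreasing on (0, ∞). -/
/-!
Differentiating the approximants `x log n + log n! - ∑_{k ≤ n} log (x + k)` of `log Γ x` (whose
derivatives converge locally uniformly) gives `ψ x = -γ + ∑ₖ (1/(k+1) - 1/(x+k))`, hence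
`ψ' x = ∑ₖ 1/(x+k)^2` and `(t ψ' t)' = ∑ₖ 1/(t+k)^2 - 2t ∑ₖ 1/(t+k)^3`.
Comparing both series with telescoping sums gives `∑ₖ 1/(t+k)^2 ≤ 1/t^2 + 1/(t+1/2)` and
`2t ∑ₖ 1/(t+k)^3 ≥ 1/t^2 + 1/t`, so this derivative is negative.
-/

open Real Set Filter Topology

theorem summable_one_div_add_pow (x : ℝ) {p : ℕ} (hp : 2 ≤ p) :
    Summable fun k : ℕ => 1 / (x + k) ^ p := by
  refine Summable.of_norm (((summable_one_div_nat_add_rpow x p).2 ?_).congr fun k => ?_)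
  · exact_mod_cast hp
  · rw [rpow_natCast, norm_div, norm_one, norm_pow, norm_eq_abs, add_comm]

theorem tendsto_one_div_add_natCast_pow (x : ℝ) {p : ℕ} (hp : p ≠ 0) :
    Tendsto (fun k : ℕ => 1 / (x + k) ^ p) atTop (𝓝 0) := by
  simp only [one_div]
  exact tendsto_inv_atTop_zero.comp ((tendsto_pow_atTop hp).comp
    (tendsto_atTop_add_const_left _ x tendsto_natCast_atTop_atTop))

theorem hasDerivAt_one_div_add_pow {x c : ℝ} (h : x + c ≠ 0) (p : ℕ) :
    HasDerivAt (fun y => 1 / (y + c) ^ p) (-p * (1 / (x + c) ^ (p + 1))) x := by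
  have := (((hasDerivAt_id x).add_const c).fun_pow p).fun_inv (pow_ne_zero p h)
  simp only [id, one_div] at this ⊢
  refine this.congr_deriv ?_
  rcases p with _ | p
  · simp
  · rw [Nat.add_sub_cancel]
    field_simp
    ring

theorem tsum_le_of_le_sub_succ {a g : ℕ → ℝ} {l : ℝ} (ha : Summable a)
    (hg : Tendsto g atTop (𝓝 l)) (h : ∀ k, a k ≤ g k - g (k + 1)) : ∑' k, a k ≤ g 0 - l :=
  le_of_tendsto_of_tendsto' ha.hasSum.tendsto_sum_nat (tendsto_const_nhds.sub hg) fun n => by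
    rw [← Finset.sum_range_sub']
    exact Finset.sum_le_sum fun k _ => h k

theorem le_tsum_of_sub_succ_le {a g : ℕ → ℝ} {l : ℝ} (ha : Summable a)
    (hg : Tendsto g atTop (𝓝 l)) (h : ∀ k, g k - g (k + 1) ≤ a k) : g 0 - l ≤ ∑' k, a k :=
  le_of_tendsto_of_tendsto' (tendsto_const_nhds.sub hg) ha.hasSum.tendsto_sum_nat fun n => by
    rw [← Finset.sum_range_sub']
    exact Finset.sum_le_sum fun k _ => h k

theorem one_div_add_half_sq_le_one_div_sub_one_div_add_one {u : ℝ} (hu : 0 < u) :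
    1 / (u + 1 / 2) ^ 2 ≤ 1 / u - 1 / (u + 1) := by
  have e : 1 / u - 1 / (u + 1) = 1 / (u * (u + 1)) := by
    field_simp
    ring
  rw [e]
  exact one_div_le_one_div_of_le (by positivity) (by nlinarith)

/-- The left side is `∫ t⁻³` over `[u, u + 1]`, which the trapezoid rule overestimates since `t⁻³`
is convex. -/
theorem one_div_two_mul_sq_sub_le {u : ℝ} (hu : 0 < u) :
    1 / (2 * u ^ 2) - 1 / (2 * (u + 1) ^ 2) ≤ (1 / u ^ 3 + 1 / (u + 1) ^ 3) / 2 := by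
  have e : (1 / u ^ 3 + 1 / (u + 1) ^ 3) / 2 - (1 / (2 * u ^ 2) - 1 / (2 * (u + 1) ^ 2)) =
      (2 * u + 1) / (2 * u ^ 3 * (u + 1) ^ 3) := by
    field_simp
    ring
  rw [← sub_nonneg, e]
  positivity

theorem abs_one_div_succ_sub_one_div_add_le {a b y : ℝ} (ha : 0 < a) (ha1 : a ≤ 1)
    (hy : y ∈ Icc a b) (k : ℕ) :
    |1 / ((k : ℝ) + 1) - 1 / (y + k)| ≤ (b + 1) / a * (1 / ((k : ℝ) + 1) ^ 2) := by
  obtain ⟨hay, hyb⟩ := hy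
  have hk : (0 : ℝ) ≤ k := k.cast_nonneg
  have hyk : 0 < y + k := by linarith
  have hden : a * ((k + 1) * (k + 1)) ≤ (k + 1) * (y + k) := by
    rw [mul_left_comm]
    gcongr
    nlinarith
  have e : 1 / ((k : ℝ) + 1) - 1 / (y + k) = (y - 1) / ((k + 1) * (y + k)) := by
    field_simp
    ring
  rw [e, abs_div, abs_of_pos (mul_pos (by positivity) hyk), div_mul_div_comm, mul_one, sq]
  exact div_le_div₀ (by linarith) (abs_le.2 ⟨by linarith, by linarith⟩) (by positivity) hden

namespace Real

theorem tendsto_log_sub_harmonic_succ :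
    Tendsto (fun n : ℕ => log n - harmonic (n + 1)) atTop (𝓝 (-eulerMascheroniConstant)) := by
  have := tendsto_harmonic_sub_log.neg.sub tendsto_one_div_add_atTop_nhds_zero_nat
  rw [sub_zero] at this
  refine this.congr fun n => ?_
  rw [harmonic_succ]
  push_cast
  ring

/-- The Hurwitz zeta function `ζ(p, x)` at an integer `p`. -/
noncomputable def hurwitzSum (p : ℕ) (x : ℝ) : ℝ := ∑' k : ℕ, 1 / (x + k) ^ p

theorem hasDerivAt_hurwitzSum {p : ℕ} (hp : 2 ≤ p) {x : ℝ} (hx : 0 < x) :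
    HasDerivAt (hurwitzSum p) (-p * hurwitzSum (p + 1) x) x := by
  have hmem : x ∈ Ioi (x / 2) := by rw [mem_Ioi]; linarith
  have := hasDerivAt_tsum_of_isPreconnected
    (g' := fun (k : ℕ) (y : ℝ) => -(p : ℝ) * (1 / (y + k) ^ (p + 1)))
    ((summable_one_div_add_pow (x / 2) (p := p + 1) (by omega)).mul_left (p : ℝ))
    isOpen_Ioi isPreconnected_Ioi
    (fun k y hy => hasDerivAt_one_div_add_pow (by rw [mem_Ioi] at hy; linarith) p)
    (fun k y hy => ?_) hmem (summable_one_div_add_pow x hp) hmem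
  · rwa [tsum_mul_left] at this
  · rw [mem_Ioi] at hy
    have : 0 < x / 2 + k := by positivity
    have : 0 < y + k := by linarith
    rw [norm_mul, norm_neg, Real.norm_natCast, norm_of_nonneg (by positivity)]
    gcongr

theorem hurwitzSum_two_le {x : ℝ} (hx : 0 < x) :
    hurwitzSum 2 x ≤ 1 / x ^ 2 + 1 / (x + 1 / 2) := by
  have htail := tsum_le_of_le_sub_succ
    ((summable_nat_add_iff 1).2 (summable_one_div_add_pow x le_rfl))
    (by simpa using (tendsto_one_div_add_natCast_pow (x + 1 / 2) one_ne_zero))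
    (g := fun k : ℕ => 1 / (x + 1 / 2 + k)) fun k => ?_
  · rw [hurwitzSum, (summable_one_div_add_pow x le_rfl).tsum_eq_zero_add]
    simpa using htail
  · have := one_div_add_half_sq_le_one_div_sub_one_div_add_one (u := x + 1 / 2 + k) (by positivity)
    push_cast
    convert this using 3 <;> ring

theorem le_hurwitzSum_three {x : ℝ} (hx : 0 < x) :
    1 / (2 * x ^ 2) + 1 / (2 * x ^ 3) ≤ hurwitzSum 3 x := by
  have hs := summable_one_div_add_pow x (p := 3) (by norm_num)
  have hs' := (summable_nat_add_iff 1).2 hs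
  have hsplit := hs.tsum_eq_zero_add
  have htrap := le_tsum_of_sub_succ_le ((hs.add hs').div_const 2)
    (by simpa using (tendsto_one_div_add_natCast_pow x two_ne_zero).mul_const 2⁻¹)
    (g := fun k : ℕ => 1 / (2 * (x + k) ^ 2)) fun k => ?_
  · rw [tsum_div_const, hs.tsum_add hs'] at htrap
    simp only [Nat.cast_zero, add_zero, sub_zero, Nat.cast_add, Nat.cast_one] at htrap hsplit
    have : 1 / (2 * x ^ 3) = 1 / x ^ 3 / 2 := by ring
    rw [hurwitzSum]
    linarith
  · have := one_div_two_mul_sq_sub_le (u := x + k) (by positivity)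
    push_cast
    convert this using 3 <;> ring

theorem hurwitzSum_two_lt_two_mul_mul_hurwitzSum_three {x : ℝ} (hx : 0 < x) :
    hurwitzSum 2 x < 2 * x * hurwitzSum 3 x := by
  have hlt : 1 / (x + 1 / 2) < 1 / x := one_div_lt_one_div_of_lt hx (by linarith)
  have e : 2 * x * (1 / (2 * x ^ 2) + 1 / (2 * x ^ 3)) = 1 / x + 1 / x ^ 2 := by
    field_simp
  calc hurwitzSum 2 x ≤ 1 / x ^ 2 + 1 / (x + 1 / 2) := hurwitzSum_two_le hx
    _ < 2 * x * (1 / (2 * x ^ 2) + 1 / (2 * x ^ 3)) := by rw [e]; linarith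
    _ ≤ 2 * x * hurwitzSum 3 x := by gcongr; exact le_hurwitzSum_three hx

theorem strictAntiOn_mul_hurwitzSum_two :
    StrictAntiOn (fun t => t * hurwitzSum 2 t) (Ioi 0) := by
  have hderiv : ∀ t ∈ Ioi (0 : ℝ), HasDerivAt (fun t => t * hurwitzSum 2 t)
      (1 * hurwitzSum 2 t + t * (-(2 : ℕ) * hurwitzSum 3 t)) t :=
    fun t ht => (hasDerivAt_id t).mul (hasDerivAt_hurwitzSum le_rfl ht)
  refine strictAntiOn_of_hasDerivWithinAt_neg (convex_Ioi 0)
    (fun t ht => (hderiv t ht).continuousAt.continuousWithinAt)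
    (fun t ht => (hderiv t (interior_subset ht)).hasDerivWithinAt) fun t ht => ?_
  rw [interior_Ioi] at ht
  have := hurwitzSum_two_lt_two_mul_mul_hurwitzSum_three ht
  push_cast
  linarith

noncomputable def digammaSeries (x : ℝ) : ℝ :=
  -eulerMascheroniConstant + ∑' k : ℕ, (1 / (k + 1) - 1 / (x + k))

theorem hasDerivAt_digammaSeries {x : ℝ} (hx : 0 < x) :
    HasDerivAt digammaSeries (hurwitzSum 2 x) x := by
  have ha : 0 < min x 1 / 2 := by positivity
  have := hasDerivAt_tsum_of_isPreconnected
    (g := fun (k : ℕ) (y : ℝ) => 1 / ((k : ℝ) + 1) - 1 / (y + k))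
    (g' := fun (k : ℕ) (y : ℝ) => 1 / (y + k) ^ 2) (t := Ioi (min x 1 / 2))
    (summable_one_div_add_pow (min x 1 / 2) le_rfl) isOpen_Ioi isPreconnected_Ioi
    (fun k y hy => ?_) (fun k y hy => ?_) (y₀ := 1)
    (by rw [mem_Ioi]; linarith [min_le_right x 1]) (by simp [add_comm])
    (y := x) (by rw [mem_Ioi]; linarith [min_le_left x 1])
  · exact this.const_add _
  · rw [mem_Ioi] at hy
    have h := (hasDerivAt_one_div_add_pow (c := k) (x := y) (by linarith) 1).const_sub
      (1 / ((k : ℝ) + 1))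
    simp only [pow_one] at h
    convert h using 1
    ring
  · rw [mem_Ioi] at hy
    have : 0 < min x 1 / 2 + k := by positivity
    rw [norm_of_nonneg (by positivity)]
    gcongr

noncomputable def digammaSeq (x : ℝ) (n : ℕ) : ℝ :=
  log n - ∑ k ∈ Finset.range (n + 1), 1 / (x + k)

theorem hasDerivAt_logGammaSeq {x : ℝ} (hx : 0 < x) (n : ℕ) :
    HasDerivAt (fun y => BohrMollerup.logGammaSeq y n) (digammaSeq x n) x := by
  have h := ((hasDerivAt_mul_const (log n)).add_const (log n.factorial)).sub
    (HasDerivAt.fun_sum (u := Finset.range (n + 1)) fun k _ =>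
      ((hasDerivAt_id x).add_const (k : ℝ)).log (by positivity))
  simp only [id] at h
  exact h.congr_deriv (by simp [digammaSeq, one_div])

theorem digammaSeq_eq (x : ℝ) (n : ℕ) :
    digammaSeq x n = (log n - harmonic (n + 1)) +
      ∑ k ∈ Finset.range (n + 1), (1 / ((k : ℝ) + 1) - 1 / (x + k)) := by
  simp [digammaSeq, harmonic, Finset.sum_sub_distrib, one_div]

theorem tendstoUniformlyOn_digammaSeq {a : ℝ} (ha : 0 < a) (ha1 : a ≤ 1) (b : ℝ) :
    TendstoUniformlyOn (fun n x => digammaSeq x n) digammaSeries atTop (Icc a b) := by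
  have hseries := tendstoUniformlyOn_tsum_nat
    (f := fun k y => 1 / ((k : ℝ) + 1) - 1 / (y + k))
    (u := fun k => (b + 1) / a * (1 / ((k : ℝ) + 1) ^ 2))
    (((summable_one_div_add_pow 1 le_rfl).mul_left _).congr fun k => by rw [add_comm])
    fun k y hy => abs_one_div_succ_sub_one_div_add_le ha ha1 hy k
  simp only [digammaSeq_eq]
  exact (tendsto_log_sub_harmonic_succ.tendstoUniformlyOn_const (Icc a b)).add
    (hseries.seq_tendstoUniformlyOn _ (tendsto_add_atTop_nat 1))

theorem hasDerivAt_log_Gamma {x : ℝ} (hx : 0 < x) :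
    HasDerivAt (fun x => log (Gamma x)) (digammaSeries x) x := by
  have ha : 0 < min x 1 / 2 := by positivity
  refine hasDerivAt_of_tendstoUniformlyOn (s := Ioo (min x 1 / 2) (x + 1)) isOpen_Ioo
    ((tendstoUniformlyOn_digammaSeq ha (by linarith [min_le_right x 1]) (x + 1)).mono
      Ioo_subset_Icc_self)
    (Eventually.of_forall fun n y hy => hasDerivAt_logGammaSeq (ha.trans hy.1) n)
    (fun y hy => BohrMollerup.tendsto_log_gamma (ha.trans hy.1)) ⟨?_, ?_⟩ <;>
  linarith [min_le_left x 1]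

theorem deriv_deriv_log_Gamma {x : ℝ} (hx : 0 < x) :
    deriv (deriv fun x => log (Gamma x)) x = hurwitzSum 2 x := by
  have h : deriv (fun x => log (Gamma x)) =ᶠ[𝓝 x] digammaSeries := by
    filter_upwards [isOpen_Ioi.mem_nhds (mem_Ioi.2 hx)] with y hy
    exact (hasDerivAt_log_Gamma hy).deriv
  rw [h.deriv_eq, (hasDerivAt_digammaSeries hx).deriv]

end Real

/-- The function `h(t) = t ψ'(t)`, where `ψ = (log Γ)'` is the digamma function,
is strictly decreasing on `(0, ∞)`. -/
theorem trigamma_times_id_strictAnti :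
    StrictAntiOn
      (fun t : ℝ => t * deriv (deriv (fun x : ℝ => Real.log (Real.Gamma x))) t)
      (Ioi (0 : ℝ)) :=
  strictAntiOn_mul_hurwitzSum_two.congr fun _ ht => by
    simp only [deriv_deriv_log_Gamma ht]
end

section
/- For every real number s > 1 and every integer n ≥ 1, one has Γ(ns+1)·Γ(2s) / Γ((n+2)s) < 1/(n+1)^s. -/
/-!
By the Beta integral, `Γ(ns+1)Γ(2s)/Γ((n+2)s) = (n+2)s ∫₀¹ x^(ns) (1-x)^(2s-1) dx`.
Split the integrand as `(xⁿ(1-x)²)^(s-1) · xⁿ(1-x)` and bound the first factor by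
`c^(s-1)`, where `c = 4nⁿ/(n+2)^(n+2)` is the maximum of `xⁿ(1-x)²` on `[0,1]`
(weighted AM-GM). As `∫₀¹ xⁿ(1-x) dx = 1/((n+1)(n+2))`, the quotient is at most
`s (c(n+1))^(s-1) / (n+1)^s`.
Finally `e · c(n+1) ≤ 1`, so `s (c(n+1))^(s-1) ≤ s e^(1-s) < 1` for `s > 1`.
-/

open Real Set intervalIntegral

theorem Real.Gamma_mul_Gamma_eq_mul_integral {a b : ℝ} (ha : 0 < a) (hb : 0 < b) :
    Gamma a * Gamma b = Gamma (a + b) * ∫ x in (0 : ℝ)..1, x ^ (a - 1) * (1 - x) ^ (b - 1) := by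
  have h := Complex.Gamma_mul_Gamma_eq_betaIntegral (s := a) (t := b)
    (by simpa using ha) (by simpa using hb)
  have hbeta : Complex.betaIntegral a b
      = ((∫ x in (0 : ℝ)..1, x ^ (a - 1) * (1 - x) ^ (b - 1) : ℝ) : ℂ) := by
    rw [Complex.betaIntegral, ← integral_ofReal]
    refine integral_congr fun x hx => ?_
    rw [uIcc_of_le zero_le_one] at hx
    push_cast
    rw [Complex.ofReal_cpow hx.1, Complex.ofReal_cpow (sub_nonneg.2 hx.2)]
    push_cast
    ring
  rw [hbeta, ← Complex.ofReal_add, Complex.Gamma_ofReal, Complex.Gamma_ofReal,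
    Complex.Gamma_ofReal, ← Complex.ofReal_mul, ← Complex.ofReal_mul] at h
  exact_mod_cast h

theorem pow_mul_one_sub_pow_le {m k : ℕ} (hm : 0 < m) (hk : 0 < k) {x : ℝ}
    (hx : x ∈ Icc 0 1) :
    x ^ m * (1 - x) ^ k ≤ (m : ℝ) ^ m * (k : ℝ) ^ k / ((m : ℝ) + k) ^ (m + k) := by
  obtain ⟨hx0, hx1⟩ := hx
  have hm' : (0 : ℝ) < m := by exact_mod_cast hm
  have hk' : (0 : ℝ) < k := by exact_mod_cast hk
  set p₁ := (m + k) * x / m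
  set p₂ := (m + k) * (1 - x) / k
  have hp₁ : 0 ≤ p₁ := by positivity
  have hp₂ : 0 ≤ p₂ := div_nonneg (mul_nonneg (by positivity) (sub_nonneg.2 hx1)) hk'.le
  -- `p₁ = p₂ = 1` exactly at the maximiser `x = m / (m + k)`
  have amgm := geom_mean_le_arith_mean2_weighted (w₁ := m / (m + k)) (w₂ := k / (m + k))
    (by positivity) (by positivity) hp₁ hp₂ (by field_simp)
  have hmean : (m : ℝ) / (m + k) * p₁ + k / (m + k) * p₂ = 1 := by
    simp only [p₁, p₂]; field_simp; ring
  have hprod : p₁ ^ m * p₂ ^ k ≤ 1 := by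
    have := rpow_le_rpow (by positivity) (hmean ▸ amgm) (by positivity : (0 : ℝ) ≤ m + k)
    rwa [one_rpow, mul_rpow (by positivity) (by positivity), ← rpow_mul hp₁, ← rpow_mul hp₂,
      div_mul_cancel₀ _ (by positivity), div_mul_cancel₀ _ (by positivity),
      rpow_natCast, rpow_natCast] at this
  rw [le_div_iff₀ (by positivity)]
  calc x ^ m * (1 - x) ^ k * ((m : ℝ) + k) ^ (m + k)
      = p₁ ^ m * p₂ ^ k * ((m : ℝ) ^ m * (k : ℝ) ^ k) := by
        simp only [p₁, p₂, div_pow, mul_pow, pow_add]; field_simp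
    _ ≤ (m : ℝ) ^ m * (k : ℝ) ^ k := by
        apply mul_le_of_le_one_left (by positivity) hprod

theorem integral_pow_mul_one_sub (n : ℕ) :
    ∫ x in (0 : ℝ)..1, x ^ n * (1 - x) = 1 / (((n : ℝ) + 1) * (n + 2)) := by
  simp_rw [mul_one_sub, ← pow_succ]
  rw [integral_sub (intervalIntegrable_pow n) (intervalIntegrable_pow (n + 1)), integral_pow,
    integral_pow]
  norm_num
  field_simp
  ring

theorem rpow_mul_one_sub_rpow_eq {x : ℝ} (hx : x ∈ Ioo 0 1) (n : ℕ) (s : ℝ) :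
    x ^ (n * s) * (1 - x) ^ (2 * s - 1)
      = (x ^ n * (1 - x) ^ 2) ^ (s - 1) * (x ^ n * (1 - x)) := by
  obtain ⟨hx0, hx1⟩ := hx
  have hy : 0 < 1 - x := sub_pos.2 hx1
  rw [mul_rpow (by positivity) (by positivity), ← rpow_natCast, ← rpow_natCast (1 - x),
    ← rpow_mul hx0.le, ← rpow_mul hy.le]
  calc x ^ (n * s) * (1 - x) ^ (2 * s - 1)
      = x ^ (n * (s - 1) + n) * (1 - x) ^ (2 * (s - 1) + 1) := by ring_nf
    _ = _ := by rw [rpow_add hx0, rpow_add hy, rpow_one, rpow_natCast]; push_cast; ring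

theorem exp_one_mul_four_mul_pow_le {n : ℕ} (hn : 0 < n) :
    exp 1 * (4 * n ^ n * (n + 1)) ≤ ((n : ℝ) + 2) ^ (n + 2) := by
  have hn' : (0 : ℝ) < n := by exact_mod_cast hn
  have bernoulli : 3 * (n : ℝ) ^ n ≤ (n + 2) ^ n := by
    have := one_add_mul_le_pow (a := 2 / (n : ℝ)) (by linarith [div_nonneg zero_le_two hn'.le]) n
    rw [mul_div_cancel₀ _ hn'.ne', one_add_div hn'.ne', div_pow,
      le_div_iff₀ (by positivity)] at this
    linarith
  have quadratic : 4 * exp 1 * (n + 1) ≤ 3 * ((n : ℝ) + 2) ^ 2 := by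
    nlinarith [exp_one_lt_d9]
  calc exp 1 * (4 * n ^ n * (n + 1)) = (n : ℝ) ^ n * (4 * exp 1 * (n + 1)) := by ring
    _ ≤ (n : ℝ) ^ n * (3 * (n + 2) ^ 2) := by gcongr
    _ ≤ ((n : ℝ) + 2) ^ (n + 2) := by rw [pow_add]; nlinarith

theorem mul_rpow_sub_one_lt_one {s d : ℝ} (hs : 1 < s) (hd : 0 ≤ d) (hde : exp 1 * d ≤ 1) :
    s * d ^ (s - 1) < 1 := by
  have hd' : d ≤ exp (-1) := by rw [exp_neg, ← one_div, le_div_iff₀ (exp_pos 1)]; linarith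
  calc s * d ^ (s - 1) ≤ s * exp (-1) ^ (s - 1) := by gcongr
    _ = s / exp (s - 1) := by rw [← exp_mul, div_eq_mul_inv, ← exp_neg]; ring_nf
    _ < 1 := by
      rw [div_lt_one (exp_pos _)]
      linarith [add_one_lt_exp (sub_ne_zero.2 hs.ne')]

theorem integral_rpow_mul_one_sub_rpow_le {n : ℕ} (hn : 0 < n) {s : ℝ} (hs : 1 ≤ s) :
    ∫ x in (0 : ℝ)..1, x ^ (n * s) * (1 - x) ^ (2 * s - 1)
      ≤ (4 * n ^ n / ((n : ℝ) + 2) ^ (n + 2)) ^ (s - 1) / (((n : ℝ) + 1) * (n + 2)) := by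
  have hf : Continuous fun x : ℝ => x ^ (n * s) * (1 - x) ^ (2 * s - 1) := by
    fun_prop (disch := first | positivity | linarith)
  calc ∫ x in (0 : ℝ)..1, x ^ (n * s) * (1 - x) ^ (2 * s - 1)
      ≤ ∫ x in (0 : ℝ)..1,
          (4 * n ^ n / ((n : ℝ) + 2) ^ (n + 2)) ^ (s - 1) * (x ^ n * (1 - x)) := by
        refine integral_mono_on_of_le_Ioo zero_le_one (hf.intervalIntegrable _ _)
          (Continuous.intervalIntegrable (by fun_prop) _ _) fun x hx => ?_
        have hmax : x ^ n * (1 - x) ^ 2 ≤ 4 * n ^ n / ((n : ℝ) + 2) ^ (n + 2) := by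
          refine (pow_mul_one_sub_pow_le hn two_pos (Ioo_subset_Icc_self hx)).trans_eq ?_
          push_cast
          ring
        have ⟨hx0, hx1⟩ := hx
        rw [rpow_mul_one_sub_rpow_eq hx]
        gcongr
    _ = _ := by rw [integral_const_mul, integral_pow_mul_one_sub, mul_one_div]

/-- Gamma function inequality for analytic monomials:
`Γ(ns+1)Γ(2s)/Γ((n+2)s) < 1/(n+1)^s` for `s > 1` and integers `n ≥ 1`. -/
theorem gamma_monomial_inequality (s : ℝ) (hs : 1 < s) (n : ℕ) (hn : 1 ≤ n) :
    Real.Gamma (n * s + 1) * Real.Gamma (2 * s) / Real.Gamma ((n + 2) * s)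
      < 1 / ((n : ℝ) + 1) ^ s := by
  set c : ℝ := 4 * n ^ n / ((n : ℝ) + 2) ^ (n + 2)
  set I := ∫ x in (0 : ℝ)..1, x ^ (n * s) * (1 - x) ^ (2 * s - 1)
  have hn' : (0 : ℝ) < n := by exact_mod_cast hn
  have hs' : 0 < s := by linarith
  have hΓ : Gamma (n * s + 1) * Gamma (2 * s) = (n + 2) * s * Gamma ((n + 2) * s) * I := by
    rw [Gamma_mul_Gamma_eq_mul_integral (by positivity) (by positivity), add_sub_cancel_right,
      show n * s + 1 + 2 * s = (n + 2) * s + 1 by ring, Gamma_add_one (by positivity)]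
  have hc : exp 1 * (c * (n + 1)) ≤ 1 := by
    rw [div_mul_eq_mul_div, mul_div_assoc', div_le_one (by positivity)]
    exact exp_one_mul_four_mul_pow_le hn
  calc Gamma (n * s + 1) * Gamma (2 * s) / Gamma ((n + 2) * s) = (n + 2) * s * I := by
        rw [hΓ]; field_simp [(Gamma_pos_of_pos (by positivity : (0 : ℝ) < (n + 2) * s)).ne']
    _ ≤ (n + 2) * s * (c ^ (s - 1) / ((n + 1) * (n + 2))) := by
        gcongr; exact integral_rpow_mul_one_sub_rpow_le hn hs.le
    _ = s * (c * (n + 1)) ^ (s - 1) / (n + 1) ^ s := by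
        rw [mul_rpow (by positivity) (by positivity),
          rpow_sub_one (by positivity : (n : ℝ) + 1 ≠ 0)]
        field_simp
    _ < 1 / (n + 1) ^ s := by
        gcongr; exact mul_rpow_sub_one_lt_one hs (by positivity) hc
end

section
/- For all real numbers s and ν with 1 < s < 2 and ν > 1, one has 2s − 1 ≤ ν^s · Γ(2s) · Γ((ν−1)s) / Γ((ν+1)s/2)². Consequently 2s − 1 ≤ inf_{ν>1} ν^s Γ(2s) Γ((ν−1)s) / Γ((ν+1)s/2)² for every 1 < s < 2. -/
open Real

lemma gamma_midpoint_sq_le {x y : ℝ} (hx : 0 < x) (hy : 0 < y) :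
    Real.Gamma ((x + y) / 2) ^ 2 ≤ Real.Gamma x * Real.Gamma y := by
  have h := convexOn_log_Gamma.2 (Set.mem_Ioi.mpr hx) (Set.mem_Ioi.mpr hy)
    (by norm_num : (0:ℝ) ≤ 1/2) (by norm_num : (0:ℝ) ≤ 1/2) (by norm_num)
  simp only [Function.comp_apply, smul_eq_mul] at h
  have hm : (1/2 : ℝ) * x + (1/2 : ℝ) * y = (x + y) / 2 := by ring
  rw [hm] at h
  have hgx := Real.Gamma_pos_of_pos hx
  have hgy := Real.Gamma_pos_of_pos hy
  have hgm := Real.Gamma_pos_of_pos (by positivity : (0:ℝ) < (x + y) / 2)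
  have h2 : 2 * Real.log (Real.Gamma ((x + y) / 2)) ≤
      Real.log (Real.Gamma x * Real.Gamma y) := by
    rw [Real.log_mul hgx.ne' hgy.ne']; linarith
  calc Real.Gamma ((x + y) / 2) ^ 2
      = Real.exp (2 * Real.log (Real.Gamma ((x + y) / 2))) := by
        rw [mul_comm, Real.exp_mul, Real.exp_log hgm, Real.rpow_two]
    _ ≤ Real.exp (Real.log (Real.Gamma x * Real.Gamma y)) := Real.exp_le_exp.mpr h2
    _ = Real.Gamma x * Real.Gamma y := Real.exp_log (by positivity)

/-- For `1 < s < 2` and `ν > 1`, `2s−1 ≤ ν^s Γ(2s)Γ((ν−1)s)/Γ((ν+1)s/2)²`;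
consequently `2s−1` is at most the infimum of the right-hand side over `ν > 1`. -/
theorem gamma_comparison_bound (s : ℝ) (hs1 : 1 < s) (hs2 : s < 2) :
    (∀ ν : ℝ, 1 < ν →
      2 * s - 1 ≤ ν ^ s * Real.Gamma (2 * s) * Real.Gamma ((ν - 1) * s) /
        Real.Gamma ((ν + 1) * s / 2) ^ 2) ∧
    2 * s - 1 ≤ sInf {x : ℝ | ∃ ν : ℝ, 1 < ν ∧
      x = ν ^ s * Real.Gamma (2 * s) * Real.Gamma ((ν - 1) * s) /
        Real.Gamma ((ν + 1) * s / 2) ^ 2} := by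
  have key : ∀ ν : ℝ, 1 < ν →
      2 * s - 1 ≤ ν ^ s * Real.Gamma (2 * s) * Real.Gamma ((ν - 1) * s) /
        Real.Gamma ((ν + 1) * s / 2) ^ 2 := by
    intro ν hν
    have hx : (0:ℝ) < 2 * s - 1 := by linarith
    have hvs : (0:ℝ) < (ν - 1) * s := by nlinarith
    have hy : (0:ℝ) < (ν - 1) * s + 1 := by linarith
    have hmid : (2 * s - 1 + ((ν - 1) * s + 1)) / 2 = (ν + 1) * s / 2 := by ring
    have hG := gamma_midpoint_sq_le hx hy
    rw [hmid] at hG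
    -- Gamma recurrences
    have h1 : Real.Gamma (2 * s) = (2 * s - 1) * Real.Gamma (2 * s - 1) := by
      have := Real.Gamma_add_one hx.ne'
      rw [show 2 * s - 1 + 1 = 2 * s by ring] at this
      exact this
    have h2 : Real.Gamma ((ν - 1) * s + 1) = (ν - 1) * s * Real.Gamma ((ν - 1) * s) := by
      exact Real.Gamma_add_one hvs.ne'
    -- Bernoulli
    have hbern : (ν - 1) * s ≤ ν ^ s := by
      have := one_add_mul_self_le_rpow_one_add (by linarith : (-1:ℝ) ≤ ν - 1) hs1.le
      rw [show (1:ℝ) + (ν - 1) = ν by ring] at this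
      nlinarith
    have hgm := Real.Gamma_pos_of_pos (show (0:ℝ) < (ν + 1) * s / 2 by nlinarith)
    have hg1 := Real.Gamma_pos_of_pos hx
    have hg2 := Real.Gamma_pos_of_pos hvs
    have hg2s := Real.Gamma_pos_of_pos (show (0:ℝ) < 2 * s by linarith)
    rw [le_div_iff₀ (by positivity)]
    calc (2 * s - 1) * Real.Gamma ((ν + 1) * s / 2) ^ 2
        ≤ (2 * s - 1) * (Real.Gamma (2 * s - 1) * Real.Gamma ((ν - 1) * s + 1)) := by
          exact mul_le_mul_of_nonneg_left hG hx.le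
      _ = (ν - 1) * s * (Real.Gamma (2 * s) * Real.Gamma ((ν - 1) * s)) := by
          rw [h1, h2]; ring
      _ ≤ ν ^ s * (Real.Gamma (2 * s) * Real.Gamma ((ν - 1) * s)) := by
          exact mul_le_mul_of_nonneg_right hbern (by positivity)
      _ = ν ^ s * Real.Gamma (2 * s) * Real.Gamma ((ν - 1) * s) := by ring
  refine ⟨key, le_csInf ⟨_, 2, one_lt_two, rfl⟩ ?_⟩
  rintro x ⟨ν, hν, rfl⟩
  exact key ν hν
end
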